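/- Let α be a finite type and let π_θ, π_old : α → ℝ be probability mass functions (i.e., nonnegative functions summing to 1). Define the total variation distance d_TV(π_θ, π_old) = (1/2)·Σ_{x ∈ α} |π_θ(x) − π_old(x)| and the concentration term η(π_θ) = 1 − Σ_{x ∈ α} π_θ(x)². Let A : α → ℝ be a function with |A(x)| ≤ A_max for all x ∈ α, where A_max ≥ 0. Then |Σ_{x ∈ α} π_θ(x)·A(x) − Σ_{x ∈ α} π_old(x)·π_θ(x)·A(x)| ≤ A_max·(η(π_θ) + 2·d_TV(π_θ, π_old)). -/

import Mathlib

/-!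
Split `πθ A - πold πθ A = πθ A (1 - πθ) + πθ A (πθ - πold)` pointwise. Since `0 ≤ πθ ≤ 1`,
the first term is at most `Amax πθ (1 - πθ)`, which sums to `Amax η(πθ)`, and the second at most
`Amax |πθ - πold|`, which sums to `2 Amax d_TV(πθ, πold)`.
-/

open Finset

lemma abs_mul_sub_mul_mul_le {p q a M : ℝ} (hp₀ : 0 ≤ p) (hp₁ : p ≤ 1) (ha : |a| ≤ M) :
    |p * a - q * p * a| ≤ M * (p * (1 - p) + |p - q|) := by
  have hsplit : p * a - q * p * a = p * (1 - p) * a + p * (p - q) * a := by ring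
  have hconc : |p * (1 - p) * a| ≤ M * (p * (1 - p)) := by
    rw [abs_mul, abs_of_nonneg (mul_nonneg hp₀ (sub_nonneg.2 hp₁)), mul_comm]
    exact mul_le_mul_of_nonneg_right ha (mul_nonneg hp₀ (sub_nonneg.2 hp₁))
  have hdist : |p * (p - q) * a| ≤ M * |p - q| := by
    rw [abs_mul, abs_mul, abs_of_nonneg hp₀, mul_comm M]
    calc p * |p - q| * |a| ≤ 1 * |p - q| * |a| := by gcongr
      _ ≤ |p - q| * M := by rw [one_mul]; gcongr
  calc |p * a - q * p * a| ≤ |p * (1 - p) * a| + |p * (p - q) * a| := hsplit ▸ abs_add_le _ _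
    _ ≤ M * (p * (1 - p) + |p - q|) := by rw [mul_add]; exact add_le_add hconc hdist

lemma sum_mul_one_sub_self_eq {ι : Type*} (s : Finset ι) (p : ι → ℝ) (hp : ∑ i ∈ s, p i = 1) :
    ∑ i ∈ s, p i * (1 - p i) = 1 - ∑ i ∈ s, p i ^ 2 := by
  simp only [mul_sub, mul_one, ← sq, sum_sub_distrib, hp]

theorem amended_is_approx_error_bound_general
    {α : Type*} [Fintype α]
    (πθ πold : α → ℝ)
    (hθ_nonneg : ∀ x, 0 ≤ πθ x) (hθ_sum : ∑ x, πθ x = 1)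
    (A : α → ℝ) (Amax : ℝ)
    (hA : ∀ x, |A x| ≤ Amax) :
    |(∑ x, πθ x * A x) - ∑ x, πold x * πθ x * A x| ≤
      Amax * ((1 - ∑ x, (πθ x) ^ 2) + 2 * ((1 / 2) * ∑ x, |πθ x - πold x|)) := by
  have hθ_le_one : ∀ x, πθ x ≤ 1 := fun x =>
    hθ_sum ▸ single_le_sum (fun y _ => hθ_nonneg y) (mem_univ x)
  calc |(∑ x, πθ x * A x) - ∑ x, πold x * πθ x * A x|
      ≤ ∑ x, |πθ x * A x - πold x * πθ x * A x| := by
        rw [← sum_sub_distrib]; exact abs_sum_le_sum_abs _ _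
    _ ≤ ∑ x, Amax * (πθ x * (1 - πθ x) + |πθ x - πold x|) :=
        sum_le_sum fun x _ => abs_mul_sub_mul_mul_le (hθ_nonneg x) (hθ_le_one x) (hA x)
    _ = Amax * ((1 - ∑ x, (πθ x) ^ 2) + 2 * ((1 / 2) * ∑ x, |πθ x - πold x|)) := by
        rw [← mul_sum, sum_add_distrib, sum_mul_one_sub_self_eq _ _ hθ_sum]; ring

theorem amended_is_approx_error_bound
    {α : Type*} [Fintype α]
    (πθ πold : α → ℝ)
    (hθ_nonneg : ∀ x, 0 ≤ πθ x) (hθ_sum : ∑ x, πθ x = 1)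
    (hold_nonneg : ∀ x, 0 ≤ πold x) (hold_sum : ∑ x, πold x = 1)
    (A : α → ℝ) (Amax : ℝ) (hAmax : 0 ≤ Amax)
    (hA : ∀ x, |A x| ≤ Amax) :
    |(∑ x, πθ x * A x) - ∑ x, πold x * πθ x * A x| ≤
      Amax * ((1 - ∑ x, (πθ x) ^ 2) + 2 * ((1 / 2) * ∑ x, |πθ x - πold x|)) :=
  amended_is_approx_error_bound_general πθ πold hθ_nonneg hθ_sum A Amax hA
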